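/- The second cohomology of the super w∞ 3-algebra with values in the trivial module ℂ vanishes: every even 2-cocycle f : ∧²w∞ × w∞ → ℂ (satisfying δ²f(x,y,z) = −f([x,y]_L,z) − (−1)^{|x||y|}f(y,ad(x)(z)) + f(x,ad(y)(z)) = 0) is a coboundary δ¹g for some linear g : w∞ → ℂ with δ¹g(x,z) = −g(ad(x)(z)). Hence H₀²(w∞,ℂ) = 0. -/

import Mathlib

noncomputable section

/-- Basis indices of the super `w∞` 3-algebra: `L_m^i`, `L̄_m^i` (even) and
`h_m^{i+1/2}`, `h̄_m^{i+1/2}` (odd). -/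
inductive WIdx : Type
  | L (m : ℤ) (i : ℕ)
  | Lb (m : ℤ) (i : ℕ)
  | H (m : ℤ) (i : ℕ)
  | Hb (m : ℤ) (i : ℕ)
deriving DecidableEq

/-- The underlying superspace of the super `w∞` 3-algebra: the free `ℂ`-module on `WIdx`. -/
abbrev W : Type := WIdx →₀ ℂ

/-- Basis vectors. -/
def e (a : WIdx) : W := Finsupp.single a 1

/-- Parity of a basis index. -/
def par : WIdx → ZMod 2
  | .L _ _ => 0
  | .Lb _ _ => 0
  | .H _ _ => 1
  | .Hb _ _ => 1

/-- The sign `(-1)^a` of a parity. -/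
def sg (a : ZMod 2) : ℂ := (-1 : ℂ) ^ a.val

/-- Structure constant `h(n−m)+j(m−k)+i(k−n)`. -/
def co (m : ℤ) (i : ℕ) (n : ℤ) (j : ℕ) (k : ℤ) (h : ℕ) : ℂ :=
  (h : ℂ) * ((n : ℂ) - (m : ℂ)) + (j : ℂ) * ((m : ℂ) - (k : ℂ))
    + (i : ℂ) * ((k : ℂ) - (n : ℂ))

/-- Structure constant `i(p−r)+α(r−m)+β(m−p)`. -/
def dd (m : ℤ) (i : ℕ) (p : ℤ) (α : ℕ) (r : ℤ) (β : ℕ) : ℂ :=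
  (i : ℂ) * ((p : ℂ) - (r : ℂ)) + (α : ℂ) * ((r : ℂ) - (m : ℂ))
    + (β : ℂ) * ((m : ℂ) - (p : ℂ))

open WIdx in
/-- The 3-bracket of the super `w∞` 3-algebra on basis indices; unlisted brackets are
obtained by super-skew-symmetry or vanish. -/
def wbr : WIdx → WIdx → WIdx → W
  | L m i, L n j, L k u => co m i n j k u • e (L (m+n+k) (i+j+u-1))
  | L m i, L n j, Lb k u => co m i n j k u • e (Lb (m+n+k) (i+j+u-1))
  | L m i, Lb k u, L n j => co m i k u n j • e (Lb (m+n+k) (i+j+u-1))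
  | Lb k u, L m i, L n j => co k u m i n j • e (Lb (m+n+k) (i+j+u-1))
  | L m i, L n j, H p α => co m i n j p α • e (H (m+n+p) (i+j+α-1))
  | L m i, H p α, L n j => co m i p α n j • e (H (m+n+p) (i+j+α-1))
  | H p α, L m i, L n j => co p α m i n j • e (H (m+n+p) (i+j+α-1))
  | L m i, L n j, Hb p α => co m i n j p α • e (Hb (m+n+p) (i+j+α-1))
  | L m i, Hb p α, L n j => co m i p α n j • e (Hb (m+n+p) (i+j+α-1))
  | Hb p α, L m i, L n j => co p α m i n j • e (Hb (m+n+p) (i+j+α-1))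
  | L m i, H p α, Hb r β => dd m i p α r β • e (Lb (m+p+r) (i+α+β-1))
  | L m i, Hb r β, H p α => dd m i p α r β • e (Lb (m+p+r) (i+α+β-1))
  | H p α, L m i, Hb r β => (- dd m i p α r β) • e (Lb (m+p+r) (i+α+β-1))
  | Hb r β, L m i, H p α => (- dd m i p α r β) • e (Lb (m+p+r) (i+α+β-1))
  | H p α, Hb r β, L m i => dd m i p α r β • e (Lb (m+p+r) (i+α+β-1))
  | Hb r β, H p α, L m i => dd m i p α r β • e (Lb (m+p+r) (i+α+β-1))
  | _, _, _ => 0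

/-- The trilinear extension of `wbr` to the whole of `W`. -/
def wbracket (x y z : W) : W :=
  x.sum fun a ca => y.sum fun b cb => z.sum fun c cc => (ca * cb * cc) • wbr a b c

/-- The `ℤ/2`-grading of `w∞`: the span of the basis vectors of a given parity. -/
def wgr (j : ZMod 2) : Submodule ℂ W :=
  Submodule.span ℂ {w : W | ∃ a : WIdx, par a = j ∧ w = e a}

/-!
The two even elements `L₀⁰ ∧ L₀¹` and `L₁⁰ ∧ L₋₁¹` of `∧²w∞` act diagonally on the basis, with
eigenvalues `-m` and `1 - 2i - m` on a basis vector of mode `m` and superscript `i`; both are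
additive along the 3-bracket, since the bracket adds modes and adds superscripts up to a shift
by `-1`. Evaluating the cocycle identity at such an element `x` shows that on a basis triple
`F` equals `F(x, [b₁, b₂, c]) / λ` with `λ` the total eigenvalue. When the total mode is nonzero
one uses the first element; when it vanishes the second eigenvalue is the odd integer `3 - 2Σi`.
So `F = -g ∘ [·,·,·]`, where `g` divides `F(x, ·)` by the eigenvalue of the appropriate `x`.
-/

namespace WIdx

def mode : WIdx → ℤ
  | L m _ | Lb m _ | H m _ | Hb m _ => m

def deg : WIdx → ℕ
  | L _ i | Lb _ i | H _ i | Hb _ i => i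

end WIdx

open WIdx

def wbracketₗ : W →ₗ[ℂ] W →ₗ[ℂ] W →ₗ[ℂ] W :=
  Finsupp.linearCombination ℂ fun a => Finsupp.linearCombination ℂ fun b =>
    Finsupp.linearCombination ℂ fun c => wbr a b c

lemma wbracketₗ_apply (x y z : W) : wbracketₗ x y z = wbracket x y z := by
  simp [wbracketₗ, wbracket, Finsupp.linearCombination_apply, LinearMap.finsupp_sum_apply,
    Finsupp.smul_sum, mul_smul]

lemma wbracket_e (a b c : WIdx) : wbracket (e a) (e b) (e c) = wbr a b c := by
  simp [← wbracketₗ_apply, wbracketₗ, e]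

def homogeneousSpan (m k : ℤ) : Submodule ℂ W :=
  Submodule.span ℂ (e '' {d | d.mode = m ∧ (d.deg : ℤ) = k})

lemma smul_e_mem_homogeneousSpan {κ : ℂ} {d : WIdx} {m k : ℤ} (hm : d.mode = m)
    (hk : κ ≠ 0 → (d.deg : ℤ) = k) : κ • e d ∈ homogeneousSpan m k := by
  by_cases hκ : κ = 0
  · simp [hκ]
  · exact Submodule.smul_mem _ _ (Submodule.subset_span ⟨d, ⟨hm, hk hκ⟩, rfl⟩)

-- The superscript `i + j + h - 1` is truncated at `0`, but then `i = j = h = 0` and the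
-- structure constant vanishes.
lemma wbr_mem_homogeneousSpan (a b c : WIdx) :
    wbr a b c ∈ homogeneousSpan (a.mode + b.mode + c.mode) (a.deg + b.deg + c.deg - 1) := by
  cases a <;> cases b <;> cases c <;> rename_i m i n j k u <;> simp only [wbr] <;>
    first
    | exact zero_mem _
    | refine smul_e_mem_homogeneousSpan (by simp only [mode] <;> ring) fun hκ => ?_
      have : ¬(i = 0 ∧ j = 0 ∧ u = 0) := by rintro ⟨rfl, rfl, rfl⟩; simp [co, dd] at hκ
      simp only [deg]
      omega

def IsTwoCocycle (F : W →ₗ[ℂ] W →ₗ[ℂ] W →ₗ[ℂ] ℂ) : Prop :=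
  ∀ a₁ a₂ b₁ b₂ c : WIdx,
    - F (wbracket (e a₁) (e a₂) (e b₁)) (e b₂) (e c)
      - sg ((par a₁ + par a₂) * par b₁) * F (e b₁) (wbracket (e a₁) (e a₂) (e b₂)) (e c)
      - sg ((par a₁ + par a₂) * (par b₁ + par b₂)) *
          F (e b₁) (e b₂) (wbracket (e a₁) (e a₂) (e c))
      + F (e a₁) (e a₂) (wbracket (e b₁) (e b₂) (e c)) = 0

lemma IsTwoCocycle.eigenvalue_sum_mul {F : W →ₗ[ℂ] W →ₗ[ℂ] W →ₗ[ℂ] ℂ} (hF : IsTwoCocycle F)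
    {a₁ a₂ : WIdx} (h₁ : par a₁ = 0) (h₂ : par a₂ = 0) {μ : WIdx → ℂ}
    (hμ : ∀ w, wbr a₁ a₂ w = μ w • e w) (b₁ b₂ c : WIdx) :
    (μ b₁ + μ b₂ + μ c) * F (e b₁) (e b₂) (e c) = F (e a₁) (e a₂) (wbr b₁ b₂ c) := by
  have h := hF a₁ a₂ b₁ b₂ c
  simp only [wbracket_e, hμ, h₁, h₂, add_zero, zero_mul, sg, ZMod.val_zero, pow_zero, one_mul,
    map_smul, LinearMap.smul_apply, smul_eq_mul] at h
  linear_combination -h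

lemma wbr_L00_L01 (w : WIdx) : wbr (L 0 0) (L 0 1) w = (-(w.mode : ℂ)) • e w := by
  cases w <;> simp [wbr, co, mode]

lemma wbr_L10_Lneg11 (w : WIdx) :
    wbr (L 1 0) (L (-1) 1) w = (1 - 2 * (w.deg : ℂ) - w.mode) • e w := by
  cases w <;> simp [wbr, co, mode, deg] <;> ring_nf

section Primitive

variable (F : W →ₗ[ℂ] W →ₗ[ℂ] W →ₗ[ℂ] ℂ)

def primitive : W →ₗ[ℂ] ℂ :=
  Finsupp.linearCombination ℂ fun d =>
    if d.mode = 0 then -(F (e (L 1 0)) (e (L (-1) 1)) (e d) / (1 - 2 * (d.deg : ℂ)))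
    else F (e (L 0 0)) (e (L 0 1)) (e d) / d.mode

lemma primitive_apply_of_mem_homogeneousSpan {v : W} {m k : ℤ} (hv : v ∈ homogeneousSpan m k) :
    primitive F v = if m = 0 then -(F (e (L 1 0)) (e (L (-1) 1)) v / (1 - 2 * (k : ℂ)))
      else F (e (L 0 0)) (e (L 0 1)) v / m := by
  split_ifs with hm
  · refine LinearMap.eqOn_span (g := -((1 - 2 * (k : ℂ))⁻¹ • F (e (L 1 0)) (e (L (-1) 1))))
      ?_ hv |>.trans (by simp [div_eq_inv_mul])
    rintro _ ⟨d, ⟨rfl, hd⟩, rfl⟩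
    simp [primitive, e, hm, ← hd, div_eq_inv_mul]
  · refine LinearMap.eqOn_span (g := (m : ℂ)⁻¹ • F (e (L 0 0)) (e (L 0 1))) ?_ hv |>.trans
      (by simp [div_eq_inv_mul])
    rintro _ ⟨d, ⟨rfl, -⟩, rfl⟩
    simp [primitive, e, hm, div_eq_inv_mul]

end Primitive

lemma IsTwoCocycle.apply_e_eq_neg_primitive {F : W →ₗ[ℂ] W →ₗ[ℂ] W →ₗ[ℂ] ℂ}
    (hF : IsTwoCocycle F) (b₁ b₂ c : WIdx) :
    F (e b₁) (e b₂) (e c) = -primitive F (wbr b₁ b₂ c) := by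
  rw [primitive_apply_of_mem_homogeneousSpan F (wbr_mem_homogeneousSpan b₁ b₂ c)]
  split_ifs with hm
  · have h := hF.eigenvalue_sum_mul rfl rfl wbr_L10_Lneg11 b₁ b₂ c
    have hm' : (b₁.mode : ℂ) + b₂.mode + c.mode = 0 := by exact_mod_cast hm
    have hodd : (3 : ℂ) - 2 * (b₁.deg + b₂.deg + c.deg) ≠ 0 := by
      have : (3 : ℤ) - 2 * (b₁.deg + b₂.deg + c.deg) ≠ 0 := by omega
      exact_mod_cast this
    have hden : 1 - 2 * ((b₁.deg + b₂.deg + c.deg - 1 : ℤ) : ℂ)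
        = 3 - 2 * (b₁.deg + b₂.deg + c.deg) := by push_cast; ring
    rw [hden, neg_neg, eq_div_iff hodd]
    linear_combination h + F (e b₁) (e b₂) (e c) * hm'
  · have h := hF.eigenvalue_sum_mul rfl rfl wbr_L00_L01 b₁ b₂ c
    rw [← neg_div, eq_div_iff (by exact_mod_cast hm)]
    push_cast
    linear_combination -h

theorem H2_trivial_coefficients_vanishes_general
    (F : W →ₗ[ℂ] W →ₗ[ℂ] W →ₗ[ℂ] ℂ)
    -- `F` is a 2-cocycle: `δ²F(x,y,z) = −F([x,y]_L,z) − (−1)^{|x||y|}F(y,ad(x)z) + F(x,ad(y)z) = 0`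
    (hcocycle : ∀ a₁ a₂ b₁ b₂ c : WIdx,
      - F (wbracket (e a₁) (e a₂) (e b₁)) (e b₂) (e c)
        - sg ((par a₁ + par a₂) * par b₁) *
            F (e b₁) (wbracket (e a₁) (e a₂) (e b₂)) (e c)
        - sg ((par a₁ + par a₂) * (par b₁ + par b₂)) *
            F (e b₁) (e b₂) (wbracket (e a₁) (e a₂) (e c))
        + F (e a₁) (e a₂) (wbracket (e b₁) (e b₂) (e c)) = 0) :
    ∃ g : W →ₗ[ℂ] ℂ, ∀ x y z : W, F x y z = - g (wbracket x y z) := by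
  have hF : F = wbracketₗ.compr₂ (LinearMap.llcomp ℂ W W ℂ (-primitive F)) := by
    ext a b c
    simpa [wbracketₗ, e] using IsTwoCocycle.apply_e_eq_neg_primitive hcocycle a b c
  refine ⟨primitive F, fun x y z => ?_⟩
  rw [← wbracketₗ_apply]
  nth_rw 1 [hF]
  simp

/-- the second cohomology of the super `w∞` 3-algebra with values in the trivial
module `ℂ` vanishes: every even 2-cocycle `F : ∧²w∞ × w∞ → ℂ` is the coboundary
`δ¹g(x,z) = −g(ad(x)(z))` of some linear `g : w∞ → ℂ`; hence `H₀²(w∞,ℂ) = 0`. -/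
theorem H2_trivial_coefficients_vanishes
    (F : W →ₗ[ℂ] W →ₗ[ℂ] W →ₗ[ℂ] ℂ)
    -- `F` is even (it kills triples of odd total parity, since `ℂ` is purely even)
    (heven : ∀ a b c : WIdx, par a + par b + par c ≠ 0 → F (e a) (e b) (e c) = 0)
    -- `F` is super-skew-symmetric in the two wedge arguments
    (hskew : ∀ (a b : WIdx) (w : W),
      F (e a) (e b) w = - (sg (par a * par b) * F (e b) (e a) w))
    -- `F` is a 2-cocycle: `δ²F(x,y,z) = −F([x,y]_L,z) − (−1)^{|x||y|}F(y,ad(x)z) + F(x,ad(y)z) = 0`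
    (hcocycle : ∀ a₁ a₂ b₁ b₂ c : WIdx,
      - F (wbracket (e a₁) (e a₂) (e b₁)) (e b₂) (e c)
        - sg ((par a₁ + par a₂) * par b₁) *
            F (e b₁) (wbracket (e a₁) (e a₂) (e b₂)) (e c)
        - sg ((par a₁ + par a₂) * (par b₁ + par b₂)) *
            F (e b₁) (e b₂) (wbracket (e a₁) (e a₂) (e c))
        + F (e a₁) (e a₂) (wbracket (e b₁) (e b₂) (e c)) = 0) :
    ∃ g : W →ₗ[ℂ] ℂ, ∀ x y z : W, F x y z = - g (wbracket x y z) :=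
  H2_trivial_coefficients_vanishes_general F hcocycle
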